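/- Let D^(s)_max = {x ∈ V : (x,α) ≤ 1 for α ∈ Π_s, (x,α) ≤ 0 for α ∈ Π_l, and (x,θ) ≥ 1}. Then: (1) an element w = v·t_r ∈ Ŵ is s-maximal if and only if w is dominant and v(r) ∈ D^(s)_max ∩ Q∨; (2) the map Ŵ^(s)_max → D^(s)_max ∩ Q∨ sending w = v·t_r to v(r) is a bijection. -/

import Mathlib

open scoped RealInnerProductSpace
open Module

noncomputable section

variable {V : Type*} [NormedAddCommGroup V] [InnerProductSpace ℝ V]

/-- The underlying function of the orthogonal reflection in the hyperplane
orthogonal to `α` (the identity if `α = 0`). -/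
def reflFun (α : V) (x : V) : V := x - (2 * ⟪α, x⟫ / ⟪α, α⟫) • α

lemma reflFun_involutive (α : V) : Function.Involutive (reflFun α) := by
  intro x
  by_cases h : α = 0
  · simp [reflFun, h]
  · have hs : ⟪α, α⟫ ≠ 0 := inner_self_ne_zero.mpr h
    have h1 : ⟪α, x - (2 * ⟪α, x⟫ / ⟪α, α⟫) • α⟫ = -⟪α, x⟫ := by
      rw [inner_sub_right, real_inner_smul_right]
      field_simp
      ring
    simp only [reflFun]
    rw [h1, show 2 * -⟪α, x⟫ / ⟪α, α⟫ = -(2 * ⟪α, x⟫ / ⟪α, α⟫) by ring,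
      neg_smul, sub_neg_eq_add]
    abel

/-- The orthogonal reflection in the hyperplane orthogonal to `α`, as a linear
equivalence (the identity if `α = 0`). -/
def sRefl (α : V) : V ≃ₗ[ℝ] V where
  toFun := reflFun α
  map_add' x y := by
    simp only [reflFun, inner_add_right]
    rw [show 2 * (⟪α, x⟫ + ⟪α, y⟫) / ⟪α, α⟫
        = 2 * ⟪α, x⟫ / ⟪α, α⟫ + 2 * ⟪α, y⟫ / ⟪α, α⟫ by ring, add_smul]
    abel
  map_smul' c x := by
    simp only [reflFun, real_inner_smul_right, RingHom.id_apply, smul_sub, smul_smul]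
    congr 2
    ring
  invFun := reflFun α
  left_inv := reflFun_involutive α
  right_inv := reflFun_involutive α

/-- The coroot `α∨ = 2α/(α,α)` of a vector `α`. -/
def corootVec (α : V) : V := (2 / ⟪α, α⟫) • α

/-- The (affine) hyperplane `{x | (x, μ) = k}`. -/
def rootHyperplane (μ : V) (k : ℝ) : Set V := {x : V | ⟪x, μ⟫ = k}

/-- `R` is a region of the hyperplane arrangement whose hyperplanes are encoded by the
pairs `(μ, k) ∈ A` (the hyperplane `{x | (x,μ) = k}`): a connected component of the
complement of the union of the hyperplanes. -/
def IsRegionOf (A : Set (V × ℝ)) (R : Set V) : Prop :=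
  ∃ x ∈ (⋃ h ∈ A, rootHyperplane h.1 h.2)ᶜ,
    R = connectedComponentIn (⋃ h ∈ A, rootHyperplane h.1 h.2)ᶜ x

open Classical in
/-- The characteristic polynomial of the hyperplane arrangement encoded by
`A : Set (V × ℝ)` in an ambient space of dimension `p`, evaluated at `t`, via
Whitney's theorem: `χ(A,t) = ∑ (-1)^{#S} t^{dim ∩ S}`, the sum being over all central
subarrangements `S ⊆ A` (junk value `0` if `A` is infinite). -/
noncomputable def charPolyEval (p : ℕ) (A : Set (V × ℝ)) (t : ℝ) : ℝ :=
  if hA : A.Finite then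
    ∑ S ∈ hA.toFinset.powerset,
      if (⋂ h ∈ (S : Set (V × ℝ)), rootHyperplane h.1 h.2).Nonempty then
        (-1 : ℝ) ^ S.card *
          t ^ (p - Module.finrank ℝ (Submodule.span ℝ (Prod.fst '' (S : Set (V × ℝ)))))
      else 0
  else 0

/-- The linear action of `w = v·t_r ∈ Ŵ` on `V ⊕ ℝδ`:
`w(μ + kδ) = v(μ) + (k - (μ,r))δ`. -/
def affAct (v : V ≃ₗ[ℝ] V) (r : V) (β : V × ℝ) : V × ℝ :=
  (v β.1, β.2 - ⟪β.1, r⟫)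

/-- The linear action of `w⁻¹` on `V ⊕ ℝδ`, for `w = v·t_r ∈ Ŵ`:
`w⁻¹(μ + kδ) = v⁻¹(μ) + (k + (v⁻¹μ, r))δ`. -/
def affActInv (v : V ≃ₗ[ℝ] V) (r : V) (β : V × ℝ) : V × ℝ :=
  (v.symm β.1, β.2 + ⟪v.symm β.1, r⟫)

/-- The affine `∗`-action of `w = v·t_r ∈ Ŵ` on `V`: `w ∗ x = v(x + r)`. -/
def affStar (v : V ≃ₗ[ℝ] V) (r : V) (x : V) : V := v (x + r)

/-- The affine `∗`-action of `w⁻¹` on `V`, for `w = v·t_r ∈ Ŵ`: `w⁻¹ ∗ x = v⁻¹(x) - r`. -/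
def affStarInv (v : V ≃ₗ[ℝ] V) (r : V) (x : V) : V := v.symm x - r

/-- An irreducible reduced crystallographic root system `Δ` of rank `p`, spanning a real
inner product space `V`, together with a choice of positive system `Δ⁺ = pos`, simple
roots `α₁, …, α_p`, and the highest root `θ`. -/
structure RootSystemData (V : Type*) [NormedAddCommGroup V] [InnerProductSpace ℝ V]
    (p : ℕ) where
  /-- the set of roots -/
  Δ : Set V
  finite : Δ.Finite
  zero_notMem : (0 : V) ∉ Δ
  span_eq_top : Submodule.span ℝ Δ = ⊤
  finrank_eq : Module.finrank ℝ V = p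
  neg_mem : ∀ α ∈ Δ, -α ∈ Δ
  /-- reduced: the only multiples of a root that are roots are `±α` -/
  reduced : ∀ α ∈ Δ, ∀ c : ℝ, c • α ∈ Δ → c = 1 ∨ c = -1
  /-- crystallographic: Cartan integers -/
  crystallographic : ∀ α ∈ Δ, ∀ β ∈ Δ, ∃ n : ℤ, 2 * ⟪α, β⟫ / ⟪α, α⟫ = (n : ℝ)
  reflect_mem : ∀ α ∈ Δ, ∀ β ∈ Δ, sRefl α β ∈ Δ
  /-- irreducible: no splitting into two orthogonal parts -/
  irred : ∀ S T : Set V, Δ = S ∪ T → (∀ a ∈ S, ∀ b ∈ T, ⟪a, b⟫ = 0) → S = ∅ ∨ T = ∅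
  /-- the simple roots `α₁, …, α_p` -/
  simpleRoot : Fin p → V
  simpleRoot_mem : ∀ i, simpleRoot i ∈ Δ
  simpleRoot_indep : LinearIndependent ℝ simpleRoot
  /-- the positive roots `Δ⁺` -/
  pos : Set V
  pos_def : pos = {α ∈ Δ | ∃ c : Fin p → ℕ, α = ∑ i, (c i : ℝ) • simpleRoot i}
  pos_or_neg : ∀ α ∈ Δ, α ∈ pos ∨ -α ∈ pos
  /-- the highest root -/
  θ : V
  θ_mem : θ ∈ pos
  θ_highest : ∀ α ∈ pos, ∃ c : Fin p → ℕ, θ = α + ∑ i, (c i : ℝ) • simpleRoot i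

namespace RootSystemData

variable {p : ℕ} (RS : RootSystemData V p)

/-- The coroot lattice `Q∨`, generated by the coroots of the roots. -/
def corootLattice : AddSubgroup V := AddSubgroup.closure (corootVec '' RS.Δ)

/-- The coweight lattice `P∨ = {x | (x, α) ∈ ℤ for all roots α}`. -/
def coweightLattice : AddSubgroup V where
  carrier := {x : V | ∀ α ∈ RS.Δ, ∃ n : ℤ, ⟪x, α⟫ = (n : ℝ)}
  zero_mem' := fun α _ => ⟨0, by simp⟩
  add_mem' := by
    intro x y hx hy α hα
    obtain ⟨n, hn⟩ := hx α hα
    obtain ⟨m, hm⟩ := hy α hα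
    exact ⟨n + m, by rw [inner_add_left, hn, hm]; push_cast; ring⟩
  neg_mem' := by
    intro x hx α hα
    obtain ⟨n, hn⟩ := hx α hα
    exact ⟨-n, by rw [inner_neg_left, hn]; push_cast; ring⟩

/-- The index of connection `f = [P∨ : Q∨]`. -/
noncomputable def indexOfConnection : ℕ :=
  RS.corootLattice.relIndex RS.coweightLattice

/-- The Weyl group `W`, generated by the reflections in the roots. -/
def weylGroup : Subgroup (V ≃ₗ[ℝ] V) :=
  Subgroup.closure {w : V ≃ₗ[ℝ] V | ∃ α ∈ RS.Δ, w = sRefl α}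

/-- The partial order `μ ≼ γ` on roots: `γ - μ` is a nonnegative integer combination of
the simple roots. -/
def rootLe (μ γ : V) : Prop :=
  ∃ c : Fin p → ℕ, γ = μ + ∑ i, (c i : ℝ) • RS.simpleRoot i

/-- An ideal of `Δ⁺`. -/
def IsIdeal (I : Set V) : Prop :=
  I ⊆ RS.pos ∧ ∀ γ ∈ I, ∀ μ ∈ RS.pos, γ + μ ∈ RS.Δ → γ + μ ∈ I

/-- An antichain in the poset `(Δ⁺, ≼)`. -/
def IsRootAntichain (Γ : Set V) : Prop :=
  Γ ⊆ RS.pos ∧ ∀ μ ∈ Γ, ∀ γ ∈ Γ, RS.rootLe μ γ → μ = γ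

/-- The set of minimal elements (generators, for an ideal) of a subset of `Δ⁺`. -/
def gens (I : Set V) : Set V := {γ ∈ I | ∀ μ ∈ I, RS.rootLe μ γ → μ = γ}

/-- The ideal `I⟨Γ⟩` generated by an antichain `Γ`. -/
def idealGen (Γ : Set V) : Set V := {μ ∈ RS.pos | ∃ γ ∈ Γ, RS.rootLe γ μ}

/-- The set `Ξ(I)` of maximal elements of `Δ⁺ \ I`. -/
def XiSet (I : Set V) : Set V :=
  {γ ∈ RS.pos \ I | ∀ μ ∈ RS.pos \ I, RS.rootLe γ μ → γ = μ}

/-- `k(μ, I)`: the minimal number of summands in an expression of `μ` as a sum of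
positive roots not in `I`. -/
noncomputable def kNum (I : Set V) (μ : V) : ℕ :=
  sInf {n : ℕ | ∃ f : Fin n → V, (∀ i, f i ∈ RS.pos \ I) ∧ μ = ∑ i, f i}

/-- A root is short if it is strictly shorter than the highest root `θ`. -/
def IsShort (α : V) : Prop := α ∈ RS.Δ ∧ ⟪α, α⟫ < ⟪RS.θ, RS.θ⟫

/-- The short positive roots `Δ⁺_s`. -/
def shortPos : Set V := {α ∈ RS.pos | ⟪α, α⟫ < ⟪RS.θ, RS.θ⟫}

/-- The long positive roots `Δ⁺_l`. -/
def longPos : Set V := {α ∈ RS.pos | ⟪α, α⟫ = ⟪RS.θ, RS.θ⟫}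

/-- `Δ` has roots of exactly two lengths, the squared length ratio (long over short)
being `ratio`. -/
def LengthRatio (ratio : ℝ) : Prop :=
  ∃ ls : ℝ, 0 < ls ∧ ls < ⟪RS.θ, RS.θ⟫ ∧
    (∀ α ∈ RS.Δ, ⟪α, α⟫ = ls ∨ ⟪α, α⟫ = ⟪RS.θ, RS.θ⟫) ∧
    (∃ α ∈ RS.Δ, ⟪α, α⟫ = ls) ∧ ⟪RS.θ, RS.θ⟫ = ratio * ls

/-- `Δ` has roots of two different lengths. -/
def TwoLengths : Prop := ∃ ratio : ℝ, RS.LengthRatio ratio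

/-- The simple roots `Π(Δ⁺_s)` of the root system `Δ_s` of short roots with respect to
the positive system `Δ⁺_s`: the short positive roots that are not sums of two short
positive roots. -/
def shortSimple : Set V :=
  {α ∈ RS.shortPos | ¬ ∃ β ∈ RS.shortPos, ∃ γ ∈ RS.shortPos, α = β + γ}

/-- The positive affine roots `Δ̂⁺`, an affine root `μ + kδ` being encoded as the pair
`(μ, k)`. -/
def affPos : Set (V × ℝ) :=
  {β : V × ℝ | β.1 ∈ RS.Δ ∧ (0 < β.2 ∨ (β.2 = 0 ∧ β.1 ∈ RS.pos))}

/-- A pair `(v, r)` with `v ∈ W`, `r ∈ Q∨` represents the element `w = v·t_r` of the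
affine Weyl group `Ŵ = W ⋉ Q∨`; it is dominant if `w(α) ∈ Δ̂⁺` for all `α ∈ Π`. -/
def IsDominantPair (v : V ≃ₗ[ℝ] V) (r : V) : Prop :=
  v ∈ RS.weylGroup ∧ r ∈ RS.corootLattice ∧
    ∀ i, affAct v r (RS.simpleRoot i, 0) ∈ RS.affPos

/-- `N(w) = {β ∈ Δ̂⁺ | w(β) ∈ -Δ̂⁺}` for `w = v·t_r`. -/
def Nset (v : V ≃ₗ[ℝ] V) (r : V) : Set (V × ℝ) :=
  {β : V × ℝ | β ∈ RS.affPos ∧ -(affAct v r β) ∈ RS.affPos}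

/-- The first layer ideal `I_w = {μ ∈ Δ⁺ | δ - μ ∈ N(w)}` of `w = v·t_r`. -/
def firstLayerIdeal (v : V ≃ₗ[ℝ] V) (r : V) : Set V :=
  {μ ∈ RS.pos | ((-μ, (1 : ℝ)) : V × ℝ) ∈ RS.Nset v r}

/-- `w = v·t_r` is minimal: dominant, and for every affine simple root `α ∈ Π̂`,
writing `w⁻¹(α) = kδ + μ`, one has `k ≥ -1`. -/
def IsMinimalPair (v : V ≃ₗ[ℝ] V) (r : V) : Prop :=
  RS.IsDominantPair v r ∧
    (∀ i, -1 ≤ (affActInv v r (RS.simpleRoot i, 0)).2) ∧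
    -1 ≤ (affActInv v r (-RS.θ, 1)).2

/-- `w = v·t_r` is maximal: dominant, and for every affine simple root `α ∈ Π̂`,
writing `w⁻¹(α) = kδ + μ`, one has `k ≤ 1`. -/
def IsMaximalPair (v : V ≃ₗ[ℝ] V) (r : V) : Prop :=
  RS.IsDominantPair v r ∧
    (∀ i, (affActInv v r (RS.simpleRoot i, 0)).2 ≤ 1) ∧
    (affActInv v r (-RS.θ, 1)).2 ≤ 1

/-- `w = v·t_r` is `s`-minimal: dominant, `k ≥ -1` for short simple `α`, and `k ≥ 0`
for `α ∈ Π̂_l = Π_l ∪ {α₀}`, where `w⁻¹(α) = kδ + μ`. -/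
def IsSMinimalPair (v : V ≃ₗ[ℝ] V) (r : V) : Prop :=
  RS.IsDominantPair v r ∧
    (∀ i, RS.IsShort (RS.simpleRoot i) →
      -1 ≤ (affActInv v r (RS.simpleRoot i, 0)).2) ∧
    (∀ i, ¬ RS.IsShort (RS.simpleRoot i) →
      0 ≤ (affActInv v r (RS.simpleRoot i, 0)).2) ∧
    0 ≤ (affActInv v r (-RS.θ, 1)).2

/-- `w = v·t_r` is `s`-maximal: dominant, `k ≤ 1` for short simple `α`, and `k ≤ 0`
for `α ∈ Π̂_l = Π_l ∪ {α₀}`, where `w⁻¹(α) = kδ + μ`. -/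
def IsSMaximalPair (v : V ≃ₗ[ℝ] V) (r : V) : Prop :=
  RS.IsDominantPair v r ∧
    (∀ i, RS.IsShort (RS.simpleRoot i) →
      (affActInv v r (RS.simpleRoot i, 0)).2 ≤ 1) ∧
    (∀ i, ¬ RS.IsShort (RS.simpleRoot i) →
      (affActInv v r (RS.simpleRoot i, 0)).2 ≤ 0) ∧
    (affActInv v r (-RS.θ, 1)).2 ≤ 0

/-- The open fundamental Weyl chamber `C`. -/
def chamber : Set V := {x : V | ∀ i, 0 < ⟪x, RS.simpleRoot i⟫}

/-- The open fundamental alcove `A`. -/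
def alcove : Set V := {x : V | (∀ i, 0 < ⟪x, RS.simpleRoot i⟫) ∧ ⟪x, RS.θ⟫ < 1}

/-- The affine arrangement of all hyperplanes `{x | (x,μ) = k}`, `μ ∈ Δ⁺`, `k ∈ ℤ`,
whose regions are the alcoves. -/
def affineArrangement : Set (V × ℝ) :=
  {h : V × ℝ | h.1 ∈ RS.pos ∧ ∃ k : ℤ, h.2 = (k : ℝ)}

/-- The dominant region `R_I` of the Catalan (equivalently, Shi) arrangement attached
to an ideal `I ⊆ Δ⁺` under the Shi bijection. -/
def regionOfIdeal (I : Set V) : Set V :=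
  {x ∈ RS.chamber | (∀ γ ∈ I, 1 < ⟪x, γ⟫) ∧ ∀ γ ∈ RS.pos \ I, ⟪x, γ⟫ < 1}

/-- The semi-Catalan arrangement `Cat_s(Δ)`. -/
def semiCatalan : Set (V × ℝ) :=
  {h : V × ℝ | h.1 ∈ RS.shortPos ∧ (h.2 = -1 ∨ h.2 = 0 ∨ h.2 = 1)} ∪
    {h : V × ℝ | h.1 ∈ RS.longPos ∧ h.2 = 0}

/-- The `m`-semi-Catalan arrangement `Cat_s^m(Δ)`. -/
def semiCatalanM (m : ℕ) : Set (V × ℝ) :=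
  {h : V × ℝ | h.1 ∈ RS.shortPos ∧ ∃ k : ℤ, |k| ≤ (m : ℤ) ∧ h.2 = (k : ℝ)} ∪
    {h : V × ℝ | h.1 ∈ RS.longPos ∧ h.2 = 0}

/-- The region `R_Γ^(s)` of the semi-Catalan arrangement attached to a short
antichain `Γ`. -/
def sRegion (Γ : Set V) : Set V :=
  {x ∈ RS.chamber | (∀ μ ∈ RS.idealGen Γ ∩ RS.shortPos, 1 < ⟪x, μ⟫) ∧
    ∀ μ ∈ RS.shortPos \ RS.idealGen Γ, ⟪x, μ⟫ < 1}

/-- `α` has height `n` (sum of the coefficients over the simple roots). -/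
def heightIs (α : V) (n : ℕ) : Prop :=
  ∃ c : Fin p → ℕ, α = ∑ i, (c i : ℝ) • RS.simpleRoot i ∧ ∑ i, c i = n

/-- `e` enumerates the exponents `e₁, …, e_p` of the Weyl group `W`, characterized by the
Shapiro–Kostant–Steinberg property: for every `k ≥ 1`, the number of positive roots of
height `k` equals the number of exponents that are `≥ k`. -/
def IsExponents (e : Fin p → ℕ) : Prop :=
  ∀ k : ℕ, 1 ≤ k →
    {α ∈ RS.pos | RS.heightIs α k}.ncard = {i : Fin p | k ≤ e i}.ncard

/-- `h` is the Coxeter number of `W`, characterized by `#Δ = p·h`. -/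
def IsCoxeterNumber (h : ℕ) : Prop := RS.Δ.ncard = p * h

open Classical in
/-- `g` is the sum of the coefficients of the short simple roots in the expression
`θ = Σ cᵢ αᵢ` of the highest root. -/
def IsShortCoeffSum (g : ℕ) : Prop :=
  ∃ c : Fin p → ℕ, RS.θ = ∑ i, (c i : ℝ) • RS.simpleRoot i ∧
    (∑ i, if RS.IsShort (RS.simpleRoot i) then c i else 0) = g

open Classical in
/-- The number of constraints of the simplex
`D_max = {x | (x,αᵢ) ≤ 1 ∀i, (x,θ) ≥ 0}` that are active (hold with equality) at `x`;
for `x ∈ D_max` this is the codimension of the face of `D_max` containing `x`. -/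
noncomputable def dmaxFaceCodim (x : V) : ℕ :=
  {i : Fin p | ⟪x, RS.simpleRoot i⟫ = 1}.ncard + (if ⟪x, RS.θ⟫ = 0 then 1 else 0)

end RootSystemData

/-!
Part (1) is bookkeeping: for `v ∈ W` one has `w⁻¹(μ + kδ) = v⁻¹μ + (k + (μ, v r))δ`, so the
inequalities defining `s`-maximality say exactly that `v r ∈ D^(s)_max`, and `v r ∈ Q∨` since `W`
preserves `Q∨`.

For (2), put `q = v r`. Then `w = v·t_r` is dominant iff `v` maps `Π`, hence all of `Δ⁺`, into the
positive system `{β | β - (β, q)δ ∈ Δ̂⁺}`. Two dominant elements over the same `q` therefore differ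
by an element of `W` stabilising `Δ⁺`, which is trivial by the exchange condition. Conversely, a
`v ∈ W` mapping as many positive roots as possible into that positive system is dominant over `q`,
since otherwise composing with a simple reflection would map one more.
-/

lemma sRefl_apply (α x : V) : sRefl α x = x - (2 * ⟪α, x⟫ / ⟪α, α⟫) • α := rfl

lemma sRefl_sRefl (α x : V) : sRefl α (sRefl α x) = x := reflFun_involutive α x

lemma sRefl_mul_self (α : V) : sRefl α * sRefl α = 1 := LinearEquiv.ext (sRefl_sRefl α)

lemma sRefl_inv (α : V) : (sRefl α)⁻¹ = sRefl α := inv_eq_of_mul_eq_one_right (sRefl_mul_self α)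

lemma sRefl_self {α : V} (h : α ≠ 0) : sRefl α α = -α := by
  have hα : ⟪α, α⟫ ≠ 0 := inner_self_ne_zero.mpr h
  rw [sRefl_apply, show 2 * ⟪α, α⟫ / ⟪α, α⟫ = 2 by field_simp]
  module

lemma sRefl_neg (α : V) : sRefl (-α) = sRefl α := by
  ext x
  simp only [sRefl_apply, inner_neg_left, inner_neg_right, neg_neg, smul_neg, neg_div,
    mul_neg, neg_smul, sub_eq_add_neg]

lemma inner_sRefl_sRefl (α x y : V) : ⟪sRefl α x, sRefl α y⟫ = ⟪x, y⟫ := by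
  by_cases h : α = 0
  · simp [sRefl_apply, h]
  · have hα : ⟪α, α⟫ ≠ 0 := inner_self_ne_zero.mpr h
    simp only [sRefl_apply, inner_sub_left, inner_sub_right, real_inner_smul_left,
      real_inner_smul_right, real_inner_comm y α, real_inner_comm x α]
    field_simp
    ring

lemma sRefl_apply_eq_mul_mul_inv {w : V ≃ₗ[ℝ] V} (hw : ∀ x y, ⟪w x, w y⟫ = ⟪x, y⟫) (α : V) :
    sRefl (w α) = w * sRefl α * w⁻¹ := by
  ext x
  have hx : ⟪w α, x⟫ = ⟪α, w.symm x⟫ := by rw [← hw α, w.apply_symm_apply]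
  simp only [sRefl_apply, LinearEquiv.mul_apply, LinearEquiv.coe_inv, map_sub, map_smul,
    w.apply_symm_apply, hx, hw]

namespace RootSystemData

variable {p : ℕ} (RS : RootSystemData V p) {α β q : V}

lemma ne_zero_of_mem (hα : α ∈ RS.Δ) : α ≠ 0 := fun h => RS.zero_notMem (h ▸ hα)

lemma pos_subset : RS.pos ⊆ RS.Δ := by
  rw [RS.pos_def]
  exact fun _ h => h.1

lemma pos_finite : RS.pos.Finite := RS.finite.subset RS.pos_subset

lemma exists_eq_sum_of_mem_pos (hα : α ∈ RS.pos) :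
    ∃ c : Fin p → ℕ, α = ∑ i, (c i : ℝ) • RS.simpleRoot i := by
  rw [RS.pos_def] at hα
  exact hα.2

lemma span_range_simpleRoot : Submodule.span ℝ (Set.range RS.simpleRoot) = ⊤ := by
  have hpos : RS.pos ⊆ Submodule.span ℝ (Set.range RS.simpleRoot) := fun β hβ => by
    obtain ⟨c, rfl⟩ := RS.exists_eq_sum_of_mem_pos hβ
    exact Submodule.sum_mem _ fun i _ =>
      Submodule.smul_mem _ _ (Submodule.subset_span ⟨i, rfl⟩)
  refine eq_top_iff.2 (RS.span_eq_top ▸ Submodule.span_le.2 fun α hα => ?_)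
  rcases RS.pos_or_neg α hα with h | h
  · exact hpos h
  · simpa using Submodule.neg_mem _ (hpos h)

def basis : Basis (Fin p) ℝ V := Basis.mk RS.simpleRoot_indep RS.span_range_simpleRoot.ge

lemma basis_apply (i : Fin p) : RS.basis i = RS.simpleRoot i := Basis.mk_apply _ _ _

lemma basis_repr_nonneg_of_mem_pos (hα : α ∈ RS.pos) (j : Fin p) :
    0 ≤ RS.basis.repr α j := by
  obtain ⟨c, rfl⟩ := RS.exists_eq_sum_of_mem_pos hα
  simp only [← RS.basis_apply, Basis.repr_sum_self]
  positivity

lemma eq_zero_of_basis_repr_nonneg (h : ∀ j, 0 ≤ RS.basis.repr α j) (hneg : -α ∈ RS.pos) :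
    α = 0 :=
  RS.basis.ext_elem fun j => by
    have := RS.basis_repr_nonneg_of_mem_pos hneg j
    simp only [map_neg, Finsupp.neg_apply, map_zero, Finsupp.coe_zero, Pi.zero_apply] at this ⊢
    linarith [h j]

lemma neg_notMem_pos (hα : α ∈ RS.pos) : -α ∉ RS.pos := fun hneg =>
  RS.ne_zero_of_mem (RS.pos_subset hα)
    (RS.eq_zero_of_basis_repr_nonneg (RS.basis_repr_nonneg_of_mem_pos hα) hneg)

lemma mem_pos_iff_basis_repr_nonneg (hα : α ∈ RS.Δ) :
    α ∈ RS.pos ↔ ∀ j, 0 ≤ RS.basis.repr α j :=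
  ⟨RS.basis_repr_nonneg_of_mem_pos, fun h => (RS.pos_or_neg α hα).resolve_right fun hneg =>
    RS.ne_zero_of_mem hα (RS.eq_zero_of_basis_repr_nonneg h hneg)⟩

lemma neg_mem_pos_iff (hα : α ∈ RS.Δ) : -α ∈ RS.pos ↔ α ∉ RS.pos :=
  ⟨fun h h' => RS.neg_notMem_pos h' h, (RS.pos_or_neg α hα).resolve_left⟩

lemma mem_pos_of_basis_repr_pos (hα : α ∈ RS.Δ) {j : Fin p} (h : 0 < RS.basis.repr α j) :
    α ∈ RS.pos :=
  (RS.pos_or_neg α hα).resolve_right fun hneg => by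
    have := RS.basis_repr_nonneg_of_mem_pos hneg j
    simp only [map_neg, Finsupp.neg_apply] at this
    linarith

lemma simpleRoot_mem_pos (i : Fin p) : RS.simpleRoot i ∈ RS.pos :=
  RS.mem_pos_of_basis_repr_pos (RS.simpleRoot_mem i) (j := i) (by simp [← RS.basis_apply])

lemma sRefl_simpleRoot_simpleRoot (i : Fin p) :
    sRefl (RS.simpleRoot i) (RS.simpleRoot i) = -RS.simpleRoot i :=
  sRefl_self (RS.ne_zero_of_mem (RS.simpleRoot_mem i))

lemma sRefl_simpleRoot_mem_pos {i : Fin p} (hβ : β ∈ RS.pos) (hne : β ≠ RS.simpleRoot i) :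
    sRefl (RS.simpleRoot i) β ∈ RS.pos := by
  have hβΔ := RS.pos_subset hβ
  -- by reducedness `β` is not a multiple of `αᵢ`, and `sᵢ` does not change the other coordinates
  obtain ⟨j, hji, hj⟩ : ∃ j ≠ i, 0 < RS.basis.repr β j := by
    by_contra! h
    have hβi : β = RS.basis.repr β i • RS.simpleRoot i := by
      refine RS.basis.ext_elem fun j => ?_
      rcases eq_or_ne j i with rfl | hji
      · simp [← RS.basis_apply]
      · simpa [← RS.basis_apply, Finsupp.single_apply, hji.symm] using
          le_antisymm (h j hji) (RS.basis_repr_nonneg_of_mem_pos hβ j)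
    rcases RS.reduced _ (RS.simpleRoot_mem i) _ (hβi ▸ hβΔ) with h1 | h1
    · exact hne (by rw [hβi, h1, one_smul])
    · rw [hβi, h1, neg_one_smul] at hβ
      exact RS.neg_notMem_pos (RS.simpleRoot_mem_pos i) hβ
  obtain ⟨n, hn⟩ := RS.crystallographic _ (RS.simpleRoot_mem i) β hβΔ
  refine RS.mem_pos_of_basis_repr_pos (RS.reflect_mem _ (RS.simpleRoot_mem i) β hβΔ) (j := j) ?_
  simpa [sRefl_apply, hn, ← RS.basis_apply, Finsupp.single_apply, hji.symm] using hj

lemma exists_inner_simpleRoot_pos (hβ : β ∈ RS.pos) : ∃ i, 0 < ⟪RS.simpleRoot i, β⟫ := by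
  by_contra! h
  obtain ⟨c, hc⟩ := RS.exists_eq_sum_of_mem_pos hβ
  have : ⟪β, β⟫ ≤ 0 := by
    nth_rewrite 1 [hc]
    rw [sum_inner]
    exact Finset.sum_nonpos fun i _ => by
      rw [real_inner_smul_left]
      exact mul_nonpos_of_nonneg_of_nonpos (by positivity) (h i)
  exact (real_inner_self_pos.2 (RS.ne_zero_of_mem (RS.pos_subset hβ))).not_ge this

variable {w : V ≃ₗ[ℝ] V}

lemma sRefl_mem_weylGroup (hα : α ∈ RS.Δ) : sRefl α ∈ RS.weylGroup :=
  Subgroup.subset_closure ⟨α, hα, rfl⟩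

lemma inner_weylGroup_apply (hw : w ∈ RS.weylGroup) (x y : V) : ⟪w x, w y⟫ = ⟪x, y⟫ := by
  induction hw using Subgroup.closure_induction generalizing x y with
  | mem w hw =>
    obtain ⟨α, -, rfl⟩ := hw
    exact inner_sRefl_sRefl α x y
  | one => rfl
  | mul a b _ _ iha ihb => exact (iha _ _).trans (ihb x y)
  | inv a _ ih => simpa using (ih (a⁻¹ x) (a⁻¹ y)).symm

lemma weylGroup_apply_mem_iff (hw : w ∈ RS.weylGroup) : w α ∈ RS.Δ ↔ α ∈ RS.Δ := by
  induction hw using Subgroup.closure_induction generalizing α with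
  | mem w hw =>
    obtain ⟨β, hβ, rfl⟩ := hw
    exact ⟨fun h => sRefl_sRefl β α ▸ RS.reflect_mem β hβ _ h, RS.reflect_mem β hβ α⟩
  | one => rfl
  | mul a b _ _ iha ihb => exact iha.trans ihb
  | inv a _ ih => rw [← ih]; simp

lemma weylGroup_apply_mem_corootLattice (hw : w ∈ RS.weylGroup) {x : V}
    (hx : x ∈ RS.corootLattice) : w x ∈ RS.corootLattice := by
  induction hx using AddSubgroup.closure_induction with
  | mem x hx =>
    obtain ⟨β, hβ, rfl⟩ := hx
    have : w (corootVec β) = corootVec (w β) := by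
      simp only [corootVec, map_smul, RS.inner_weylGroup_apply hw]
    exact this ▸ AddSubgroup.subset_closure ⟨w β, (RS.weylGroup_apply_mem_iff hw).2 hβ, rfl⟩
  | zero => simp
  | add x y _ _ hx hy => simpa using add_mem hx hy
  | neg x _ hx => simpa using RS.corootLattice.neg_mem hx

def simpleWord (l : List (Fin p)) : V ≃ₗ[ℝ] V := (l.map fun i => sRefl (RS.simpleRoot i)).prod

@[simp] lemma simpleWord_nil : RS.simpleWord [] = 1 := rfl

@[simp] lemma simpleWord_cons (i : Fin p) (l : List (Fin p)) :
    RS.simpleWord (i :: l) = sRefl (RS.simpleRoot i) * RS.simpleWord l := by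
  simp [simpleWord]

@[simp] lemma simpleWord_append (l m : List (Fin p)) :
    RS.simpleWord (l ++ m) = RS.simpleWord l * RS.simpleWord m := by
  simp [simpleWord]

lemma simpleWord_reverse (l : List (Fin p)) : RS.simpleWord l.reverse = (RS.simpleWord l)⁻¹ := by
  induction l with
  | nil => simp
  | cons i l ih => simp [ih, sRefl_inv]

lemma simpleWord_mem_weylGroup (l : List (Fin p)) : RS.simpleWord l ∈ RS.weylGroup := by
  induction l with
  | nil => exact one_mem _
  | cons i l ih => exact mul_mem (RS.sRefl_mem_weylGroup (RS.simpleRoot_mem i)) ih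

def height : V →ₗ[ℝ] ℝ := RS.basis.constr ℝ fun _ => 1

lemma height_simpleRoot (i : Fin p) : RS.height (RS.simpleRoot i) = 1 := by
  rw [← RS.basis_apply, height, Basis.constr_basis]

lemma height_nonneg (hβ : β ∈ RS.pos) : 0 ≤ RS.height β := by
  obtain ⟨c, rfl⟩ := RS.exists_eq_sum_of_mem_pos hβ
  simp only [map_sum, map_smul, height_simpleRoot, smul_eq_mul, mul_one]
  positivity

lemma exists_simpleWord_apply_simpleRoot (hβ : β ∈ RS.pos) :
    ∃ (l : List (Fin p)) (i : Fin p), β = RS.simpleWord l (RS.simpleRoot i) := by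
  obtain ⟨n, hn⟩ := exists_nat_gt (RS.height β)
  induction n generalizing β with
  | zero => exact absurd hn (by simpa using RS.height_nonneg hβ)
  | succ n ih =>
    obtain ⟨i, hi⟩ := RS.exists_inner_simpleRoot_pos hβ
    by_cases hβi : β = RS.simpleRoot i
    · exact ⟨[], i, by simp [hβi]⟩
    -- `sᵢ β = β - m αᵢ` is a positive root of smaller height, as `m` is a positive integer
    obtain ⟨m, hm⟩ := RS.crystallographic _ (RS.simpleRoot_mem i) β (RS.pos_subset hβ)
    have hm1 : (1 : ℝ) ≤ m := by
      have hαi := real_inner_self_pos.2 (RS.ne_zero_of_mem (RS.simpleRoot_mem i))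
      have : (0 : ℝ) < m := hm ▸ by positivity
      exact_mod_cast Int.cast_pos.1 this
    obtain ⟨l, k, hl⟩ := ih (RS.sRefl_simpleRoot_mem_pos hβ hβi) (by
      rw [sRefl_apply, hm, map_sub, map_smul, height_simpleRoot]
      push_cast at hn
      simp only [smul_eq_mul, mul_one]
      linarith)
    exact ⟨i :: l, k, by rw [simpleWord_cons, LinearEquiv.mul_apply, ← hl, sRefl_sRefl]⟩

lemma exists_simpleWord (hw : w ∈ RS.weylGroup) : ∃ l, w = RS.simpleWord l := by
  induction hw using Subgroup.closure_induction with
  | mem w hw =>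
    obtain ⟨α, hα, rfl⟩ := hw
    wlog hpos : α ∈ RS.pos generalizing α
    · simpa [sRefl_neg] using
        this (-α) (RS.neg_mem α hα) ((RS.pos_or_neg α hα).resolve_left hpos)
    obtain ⟨l, i, rfl⟩ := RS.exists_simpleWord_apply_simpleRoot hpos
    refine ⟨l ++ [i] ++ l.reverse, ?_⟩
    rw [sRefl_apply_eq_mul_mul_inv (RS.inner_weylGroup_apply (RS.simpleWord_mem_weylGroup l)),
      simpleWord_append, simpleWord_append, simpleWord_reverse]
    simp
  | one => exact ⟨[], rfl⟩
  | mul _ _ _ _ ha hb =>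
    obtain ⟨la, rfl⟩ := ha
    obtain ⟨lb, rfl⟩ := hb
    exact ⟨la ++ lb, (RS.simpleWord_append la lb).symm⟩
  | inv _ _ h =>
    obtain ⟨l, rfl⟩ := h
    exact ⟨l.reverse, (RS.simpleWord_reverse l).symm⟩

/-- The exchange condition. -/
lemma exists_shorter_simpleWord (l : List (Fin p)) (k : Fin p)
    (h : -RS.simpleWord l (RS.simpleRoot k) ∈ RS.pos) :
    ∃ l' : List (Fin p), l'.length < l.length ∧ RS.simpleWord (l ++ [k]) = RS.simpleWord l' := by
  induction l with
  | nil => exact absurd h (RS.neg_notMem_pos (RS.simpleRoot_mem_pos k))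
  | cons j m ih =>
    by_cases hm : -RS.simpleWord m (RS.simpleRoot k) ∈ RS.pos
    · obtain ⟨m', hlen, heq⟩ := ih hm
      exact ⟨j :: m', by simpa using hlen, by rw [List.cons_append, simpleWord_cons, heq,
        simpleWord_cons]⟩
    set β := RS.simpleWord m (RS.simpleRoot k)
    have hβ : β ∈ RS.pos := (RS.pos_or_neg β ((RS.weylGroup_apply_mem_iff
      (RS.simpleWord_mem_weylGroup m)).2 (RS.simpleRoot_mem k))).resolve_right hm
    have hβj : β = RS.simpleRoot j := by
      by_contra hne
      exact RS.neg_notMem_pos (RS.sRefl_simpleRoot_mem_pos hβ hne) (by simpa using h)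
    have hconj : sRefl (RS.simpleRoot j) =
        RS.simpleWord m * sRefl (RS.simpleRoot k) * (RS.simpleWord m)⁻¹ := by
      rw [← hβj]
      exact sRefl_apply_eq_mul_mul_inv (RS.inner_weylGroup_apply (RS.simpleWord_mem_weylGroup m)) _
    refine ⟨m, by simp, ?_⟩
    simp [hconj, mul_assoc, sRefl_mul_self]

lemma simpleWord_eq_one_of_mapsTo_pos (l : List (Fin p))
    (hl : ∀ α ∈ RS.pos, RS.simpleWord l α ∈ RS.pos) : RS.simpleWord l = 1 := by
  induction hn : l.length using Nat.strong_induction_on generalizing l with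
  | _ n ih =>
  rcases l.eq_nil_or_concat with rfl | ⟨l₀, k, rfl⟩
  · rfl
  have hk : -RS.simpleWord l₀ (RS.simpleRoot k) ∈ RS.pos := by
    simpa [RS.sRefl_simpleRoot_simpleRoot] using hl _ (RS.simpleRoot_mem_pos k)
  obtain ⟨l', hlen, heq⟩ := RS.exists_shorter_simpleWord l₀ k hk
  rw [List.concat_eq_append, heq] at hl ⊢
  exact ih l'.length (by simp at hn; omega) l' hl rfl

lemma eq_one_of_mapsTo_pos (hw : w ∈ RS.weylGroup) (h : ∀ α ∈ RS.pos, w α ∈ RS.pos) : w = 1 := by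
  obtain ⟨l, rfl⟩ := RS.exists_simpleWord hw
  exact RS.simpleWord_eq_one_of_mapsTo_pos l h

def posSystem (q : V) : Set V := {β | (β, -⟪β, q⟫) ∈ RS.affPos}

/-- An additively closed set cutting `posSystem q` out of `Δ`. -/
def lexCone (q : V) : AddSubmonoid V where
  carrier := {x | ⟪x, q⟫ < 0 ∨ (⟪x, q⟫ = 0 ∧ ∀ j, 0 ≤ RS.basis.repr x j)}
  zero_mem' := Or.inr ⟨inner_zero_left _, fun j => by simp⟩
  add_mem' := by
    rintro x y (hx | ⟨hx, hx'⟩) (hy | ⟨hy, hy'⟩) <;>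
      simp only [Set.mem_ofPred_eq, inner_add_left, map_add, Finsupp.add_apply]
    · exact Or.inl (by linarith)
    · exact Or.inl (by linarith)
    · exact Or.inl (by linarith)
    · exact Or.inr ⟨by linarith, fun j => add_nonneg (hx' j) (hy' j)⟩

lemma mem_posSystem_iff_mem_lexCone (hβ : β ∈ RS.Δ) : β ∈ RS.posSystem q ↔ β ∈ RS.lexCone q := by
  simp [posSystem, affPos, lexCone, hβ, RS.mem_pos_iff_basis_repr_nonneg hβ]

lemma neg_mem_posSystem_iff (hβ : β ∈ RS.Δ) : -β ∈ RS.posSystem q ↔ β ∉ RS.posSystem q := by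
  simp only [posSystem, affPos, Set.mem_ofPred_eq, inner_neg_left, neg_neg, RS.neg_mem β hβ, hβ,
    true_and, RS.neg_mem_pos_iff hβ]
  rcases lt_trichotomy ⟪β, q⟫ 0 with h | h | h
  · simp [h, h.not_gt, h.ne]
  · simp [h]
  · simp [h, h.ne', h.not_gt]

lemma isDominantPair_iff {v : V ≃ₗ[ℝ] V} {r : V} :
    RS.IsDominantPair v r ↔ v ∈ RS.weylGroup ∧ r ∈ RS.corootLattice ∧
      ∀ i, v (RS.simpleRoot i) ∈ RS.posSystem (v r) := by
  refine and_congr_right fun hv => and_congr_right fun _ => forall_congr' fun i => ?_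
  simp only [affAct, posSystem, zero_sub, RS.inner_weylGroup_apply hv, Set.mem_ofPred_eq]

variable {v v' : V ≃ₗ[ℝ] V} {r r' : V}

lemma apply_mem_posSystem_of_isDominantPair (hd : RS.IsDominantPair v r) (hα : α ∈ RS.pos) :
    v α ∈ RS.posSystem (v r) := by
  obtain ⟨hv, -, hsimple⟩ := RS.isDominantPair_iff.1 hd
  have hvα : v α ∈ RS.Δ := (RS.weylGroup_apply_mem_iff hv).2 (RS.pos_subset hα)
  have hvsimple : ∀ i, v (RS.simpleRoot i) ∈ RS.lexCone (v r) := fun i =>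
    (RS.mem_posSystem_iff_mem_lexCone ((RS.weylGroup_apply_mem_iff hv).2
      (RS.simpleRoot_mem i))).1 (hsimple i)
  rw [RS.mem_posSystem_iff_mem_lexCone hvα]
  obtain ⟨c, rfl⟩ := RS.exists_eq_sum_of_mem_pos hα
  simp only [map_sum, Nat.cast_smul_eq_nsmul, map_nsmul]
  exact AddSubmonoid.sum_mem _ fun i _ => AddSubmonoid.nsmul_mem _ (hvsimple i) _

lemma symm_apply_mem_pos_of_isDominantPair (hd : RS.IsDominantPair v r)
    (hβ : β ∈ RS.posSystem (v r)) : v.symm β ∈ RS.pos := by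
  have hβΔ : β ∈ RS.Δ := hβ.1
  have hvβ : v.symm β ∈ RS.Δ := (RS.weylGroup_apply_mem_iff (inv_mem hd.1)).2 hβΔ
  by_contra hneg
  have h := RS.apply_mem_posSystem_of_isDominantPair hd ((RS.neg_mem_pos_iff hvβ).2 hneg)
  rw [map_neg, v.apply_symm_apply, RS.neg_mem_posSystem_iff hβΔ] at h
  exact h hβ

lemma eq_of_isDominantPair (hd : RS.IsDominantPair v r) (hd' : RS.IsDominantPair v' r')
    (h : v r = v' r') : v = v' ∧ r = r' := by
  have hu : v'⁻¹ * v = 1 := RS.eq_one_of_mapsTo_pos (mul_mem (inv_mem hd'.1) hd.1) fun α hα =>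
    RS.symm_apply_mem_pos_of_isDominantPair hd' (h ▸ RS.apply_mem_posSystem_of_isDominantPair hd hα)
  obtain rfl : v' = v := inv_mul_eq_one.1 hu
  exact ⟨rfl, v'.injective h⟩

lemma setOf_mul_sRefl_simpleRoot {S : Set V} {i : Fin p} (hi : v (RS.simpleRoot i) ∉ S)
    (hi' : -v (RS.simpleRoot i) ∈ S) :
    {α ∈ RS.pos | (v * sRefl (RS.simpleRoot i)) α ∈ S} =
      insert (RS.simpleRoot i) (sRefl (RS.simpleRoot i) '' {α ∈ RS.pos | v α ∈ S}) := by
  ext α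
  simp only [Set.mem_ofPred_eq, Set.mem_insert_iff, Set.mem_image, LinearEquiv.mul_apply]
  constructor
  · rintro ⟨hα, hS⟩
    by_cases hαi : α = RS.simpleRoot i
    · exact Or.inl hαi
    · exact Or.inr ⟨_, ⟨RS.sRefl_simpleRoot_mem_pos hα hαi, hS⟩, sRefl_sRefl _ _⟩
  · rintro (rfl | ⟨β, ⟨hβ, hS⟩, rfl⟩)
    · exact ⟨RS.simpleRoot_mem_pos i, by rwa [RS.sRefl_simpleRoot_simpleRoot, map_neg]⟩
    · have hβi : β ≠ RS.simpleRoot i := by rintro rfl; exact hi hS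
      exact ⟨RS.sRefl_simpleRoot_mem_pos hβ hβi, by rwa [sRefl_sRefl]⟩

lemma ncard_setOf_mul_sRefl_simpleRoot {S : Set V} {i : Fin p} (hi : v (RS.simpleRoot i) ∉ S)
    (hi' : -v (RS.simpleRoot i) ∈ S) :
    {α ∈ RS.pos | (v * sRefl (RS.simpleRoot i)) α ∈ S}.ncard =
      {α ∈ RS.pos | v α ∈ S}.ncard + 1 := by
  have hfin : {α ∈ RS.pos | v α ∈ S}.Finite := RS.pos_finite.subset fun _ h => h.1
  rw [RS.setOf_mul_sRefl_simpleRoot hi hi', Set.ncard_insert_of_notMem _ (hfin.image _),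
    Set.ncard_image_of_injective _ (LinearEquiv.injective _)]
  rintro ⟨β, ⟨hβ, -⟩, hβi⟩
  rw [← sRefl_sRefl (RS.simpleRoot i) β, hβi, RS.sRefl_simpleRoot_simpleRoot] at hβ
  exact RS.neg_notMem_pos (RS.simpleRoot_mem_pos i) hβ

lemma exists_isDominantPair (hq : q ∈ RS.corootLattice) :
    ∃ v r, RS.IsDominantPair v r ∧ v r = q := by
  let count : (V ≃ₗ[ℝ] V) → ℕ := fun v => {α ∈ RS.pos | v α ∈ RS.posSystem q}.ncard
  obtain ⟨v, hv, hmax⟩ : ∃ v ∈ RS.weylGroup, ∀ w ∈ RS.weylGroup, count w ≤ count v := by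
    have hbdd : BddAbove (count '' RS.weylGroup) := ⟨RS.pos.ncard, by
      rintro _ ⟨w, -, rfl⟩
      exact Set.ncard_le_ncard (fun _ h => h.1) RS.pos_finite⟩
    have hne : (count '' RS.weylGroup).Nonempty := ⟨_, 1, one_mem _, rfl⟩
    obtain ⟨v, hv, hvc⟩ := Nat.sSup_mem hne hbdd
    exact ⟨v, hv, fun w hw => hvc ▸ le_csSup hbdd ⟨w, hw, rfl⟩⟩
  refine ⟨v, v.symm q, RS.isDominantPair_iff.2 ⟨hv, RS.weylGroup_apply_mem_corootLattice
    (inv_mem hv) hq, fun i => ?_⟩, v.apply_symm_apply q⟩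
  rw [v.apply_symm_apply]
  by_contra hi
  have hi' := (RS.neg_mem_posSystem_iff ((RS.weylGroup_apply_mem_iff hv).2
    (RS.simpleRoot_mem i))).2 hi
  have := hmax _ (mul_mem hv (RS.sRefl_mem_weylGroup (RS.simpleRoot_mem i)))
  simp only [count, RS.ncard_setOf_mul_sRefl_simpleRoot hi hi'] at this
  omega

lemma affActInv_snd (hv : v ∈ RS.weylGroup) (r : V) (β : V × ℝ) :
    (affActInv v r β).2 = β.2 + ⟪β.1, v r⟫ := by
  rw [affActInv, ← RS.inner_weylGroup_apply hv (v.symm β.1) r, v.apply_symm_apply]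

lemma isSMaximalPair_iff (v : V ≃ₗ[ℝ] V) (r : V) :
    RS.IsSMaximalPair v r ↔ RS.IsDominantPair v r ∧
      v r ∈ {x : V | (∀ i, RS.IsShort (RS.simpleRoot i) → ⟪x, RS.simpleRoot i⟫ ≤ 1) ∧
          (∀ i, ¬ RS.IsShort (RS.simpleRoot i) → ⟪x, RS.simpleRoot i⟫ ≤ 0) ∧
          1 ≤ ⟪x, RS.θ⟫} ∩ (RS.corootLattice : Set V) := by
  refine and_congr_right fun hd => ?_
  simp only [RS.affActInv_snd hd.1, Set.mem_inter_iff, Set.mem_ofPred_eq, SetLike.mem_coe,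
    RS.weylGroup_apply_mem_corootLattice hd.1 hd.2.1, and_true, zero_add, inner_neg_right,
    real_inner_comm (v r)]
  constructor <;> rintro ⟨h1, h2, h3⟩ <;> exact ⟨h1, h2, by linarith⟩

end RootSystemData

theorem statement13_general {V : Type*} [NormedAddCommGroup V] [InnerProductSpace ℝ V] {p : ℕ}
    (RS : RootSystemData V p) :
    (∀ (v : V ≃ₗ[ℝ] V) (r : V),
      RS.IsSMaximalPair v r ↔ RS.IsDominantPair v r ∧
        v r ∈ {x : V | (∀ i, RS.IsShort (RS.simpleRoot i) → ⟪x, RS.simpleRoot i⟫ ≤ 1) ∧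
            (∀ i, ¬ RS.IsShort (RS.simpleRoot i) → ⟪x, RS.simpleRoot i⟫ ≤ 0) ∧
            1 ≤ ⟪x, RS.θ⟫} ∩ (RS.corootLattice : Set V)) ∧
    Set.BijOn (fun vr : (V ≃ₗ[ℝ] V) × V => vr.1 vr.2)
      {vr : (V ≃ₗ[ℝ] V) × V | RS.IsSMaximalPair vr.1 vr.2}
      ({x : V | (∀ i, RS.IsShort (RS.simpleRoot i) → ⟪x, RS.simpleRoot i⟫ ≤ 1) ∧
          (∀ i, ¬ RS.IsShort (RS.simpleRoot i) → ⟪x, RS.simpleRoot i⟫ ≤ 0) ∧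
          1 ≤ ⟪x, RS.θ⟫} ∩ (RS.corootLattice : Set V)) := by
  refine ⟨RS.isSMaximalPair_iff, fun vr hvr => ((RS.isSMaximalPair_iff _ _).1 hvr).2, ?_, ?_⟩
  · rintro ⟨v, r⟩ h ⟨v', r'⟩ h' heq
    obtain ⟨rfl, rfl⟩ := RS.eq_of_isDominantPair h.1 h'.1 heq
    rfl
  · intro x hx
    obtain ⟨v, r, hd, rfl⟩ := RS.exists_isDominantPair hx.2
    exact ⟨(v, r), (RS.isSMaximalPair_iff v r).2 ⟨hd, hx⟩, rfl⟩

/-- Let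
`D^(s)_max = {x : (x,α) ≤ 1 for α ∈ Π_s, (x,α) ≤ 0 for α ∈ Π_l, (x,θ) ≥ 1}`. Then:
(1) `w = v·t_r ∈ Ŵ` is `s`-maximal iff `w` is dominant and `v(r) ∈ D^(s)_max ∩ Q∨`;
(2) the map `Ŵ^(s)_max → D^(s)_max ∩ Q∨` sending `w = v·t_r` to `v(r)` is a bijection. -/
theorem statement13 {V : Type*} [NormedAddCommGroup V] [InnerProductSpace ℝ V] {p : ℕ}
    (RS : RootSystemData V p) (htwo : RS.TwoLengths) :
    (∀ (v : V ≃ₗ[ℝ] V) (r : V),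
      RS.IsSMaximalPair v r ↔ RS.IsDominantPair v r ∧
        v r ∈ {x : V | (∀ i, RS.IsShort (RS.simpleRoot i) → ⟪x, RS.simpleRoot i⟫ ≤ 1) ∧
            (∀ i, ¬ RS.IsShort (RS.simpleRoot i) → ⟪x, RS.simpleRoot i⟫ ≤ 0) ∧
            1 ≤ ⟪x, RS.θ⟫} ∩ (RS.corootLattice : Set V)) ∧
    Set.BijOn (fun vr : (V ≃ₗ[ℝ] V) × V => vr.1 vr.2)
      {vr : (V ≃ₗ[ℝ] V) × V | RS.IsSMaximalPair vr.1 vr.2}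
      ({x : V | (∀ i, RS.IsShort (RS.simpleRoot i) → ⟪x, RS.simpleRoot i⟫ ≤ 1) ∧
          (∀ i, ¬ RS.IsShort (RS.simpleRoot i) → ⟪x, RS.simpleRoot i⟫ ≤ 0) ∧
          1 ≤ ⟪x, RS.θ⟫} ∩ (RS.corootLattice : Set V)) :=
  statement13_general RS
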